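/- arXiv:1607.08502 — 4 statements merged into one kernel-verified Lean document; each statement's English description precedes it below -/
import Mathlib

section
/- Let γ ≥ 2 be an integer and C_* > 0, ξ, ξ_⊗ ≥ 0. Let {η_ℓ}_{ℓ≥1} and {η_{ℓ,⊗}}_{ℓ≥1} be sequences of nonnegative reals satisfying η_1 ≤ ξ, η_ℓ ≤ ξ + C_* η_{ℓ-1}^γ for ℓ ≥ 2, η_{1,⊗}² ≤ ξ_⊗², and η_{ℓ,⊗}² ≤ ξ_⊗² + 2 ξ C_* η_{ℓ-1}^γ + C_*² η_{ℓ-1,⊗}^{2γ} for ℓ ≥ 2. If C_* γ > 1 and max{ξ, ξ_⊗} ≤ ((γ−1)/γ) · (C_* γ)^{−1/(γ−1)}, then max{η_ℓ, η_{ℓ,⊗}} ≤ (γ/(γ−1)) · max{ξ, ξ_⊗} < 1 for all ℓ ≥ 1, and in the case γ = 2 one has max{η_ℓ, η_{ℓ,⊗}} ≤ 2 max{ξ, ξ_⊗} / (1 + √(1 − 4 C_* max{ξ, ξ_⊗})) < 1 for all ℓ ≥ 1. -/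
/-!
If `B ≥ 0` satisfies `M + C B^γ ≤ B` with `M = max ξ ξt`, then the two recursions preserve the
bound `η, ηt ≤ B`: the second one because its right-hand side is at most `(M + C B^γ)^2`.
For general `γ` take `B = γ/(γ-1) M`. The smallness assumption says `B ≤ κ = (Cγ)^{-1/(γ-1)}`,
the point where the derivative of `C x^γ` equals one, so `C B^γ ≤ B/γ` and `M + C B^γ ≤ B`;
moreover `κ < 1` since `Cγ > 1`.
For `γ = 2` take for `B` the smaller root of `C B^2 - B + M`, which lies below `2M`.
-/

noncomputable def criticalRadius (C : ℝ) (γ : ℕ) : ℝ := (C * γ) ^ (-(1 : ℝ) / ((γ : ℝ) - 1))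

section CriticalRadius

variable {C : ℝ} {γ : ℕ}

theorem mul_criticalRadius_pow (hγ : 2 ≤ γ) (hC : 0 < C) :
    C * criticalRadius C γ ^ (γ - 1) = 1 / γ := by
  have hγ0 : (0 : ℝ) < γ := by positivity
  have hcast : ((γ - 1 : ℕ) : ℝ) = (γ : ℝ) - 1 := by rw [Nat.cast_sub (by omega)]; simp
  have hne : (γ : ℝ) - 1 ≠ 0 := by
    have : (2 : ℝ) ≤ γ := by exact_mod_cast hγ
    linarith
  rw [criticalRadius, ← Real.rpow_natCast, hcast, ← Real.rpow_mul (by positivity),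
    div_mul_cancel₀ _ hne, Real.rpow_neg_one]
  field_simp

theorem criticalRadius_lt_one (hγ : 2 ≤ γ) (hCγ : 1 < C * γ) : criticalRadius C γ < 1 := by
  have : (2 : ℝ) ≤ γ := by exact_mod_cast hγ
  exact Real.rpow_lt_one_of_one_lt_of_neg hCγ (div_neg_of_neg_of_pos (by norm_num) (by linarith))

theorem criticalRadius_two (C : ℝ) : criticalRadius C 2 = (C * 2)⁻¹ := by
  norm_num [criticalRadius, Real.rpow_neg_one]

theorem mul_pow_le_div_of_le_criticalRadius (hγ : 2 ≤ γ) (hC : 0 < C) {x : ℝ} (hx : 0 ≤ x)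
    (hxκ : x ≤ criticalRadius C γ) : C * x ^ γ ≤ x / γ := by
  calc C * x ^ γ = C * x ^ (γ - 1) * x := by
        rw [mul_assoc, ← pow_succ, Nat.sub_add_cancel (by omega)]
    _ ≤ C * criticalRadius C γ ^ (γ - 1) * x := by gcongr
    _ = x / γ := by rw [mul_criticalRadius_pow hγ hC]; ring

theorem div_sub_one_mul_le_criticalRadius (hγ : 2 ≤ γ) {M : ℝ}
    (hM : M ≤ ((γ : ℝ) - 1) / γ * criticalRadius C γ) :
    (γ : ℝ) / ((γ : ℝ) - 1) * M ≤ criticalRadius C γ := by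
  have : (2 : ℝ) ≤ γ := by exact_mod_cast hγ
  calc (γ : ℝ) / ((γ : ℝ) - 1) * M
        ≤ (γ : ℝ) / ((γ : ℝ) - 1) * (((γ : ℝ) - 1) / γ * criticalRadius C γ) := by
        gcongr
        exact div_nonneg (by positivity) (by linarith)
    _ = criticalRadius C γ := by
        have : (γ : ℝ) - 1 ≠ 0 := by linarith
        field_simp

theorem add_mul_pow_le_of_le_criticalRadius (hγ : 2 ≤ γ) (hC : 0 < C) {M : ℝ} (hM0 : 0 ≤ M)
    (hM : M ≤ ((γ : ℝ) - 1) / γ * criticalRadius C γ) :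
    M + C * ((γ : ℝ) / ((γ : ℝ) - 1) * M) ^ γ ≤ (γ : ℝ) / ((γ : ℝ) - 1) * M := by
  have : (2 : ℝ) ≤ γ := by exact_mod_cast hγ
  have hB0 : 0 ≤ (γ : ℝ) / ((γ : ℝ) - 1) * M := by
    have : 0 ≤ (γ : ℝ) - 1 := by linarith
    positivity
  have := mul_pow_le_div_of_le_criticalRadius hγ hC hB0 (div_sub_one_mul_le_criticalRadius hγ hM)
  have hid : M + (γ : ℝ) / ((γ : ℝ) - 1) * M / γ = (γ : ℝ) / ((γ : ℝ) - 1) * M := by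
    have : (γ : ℝ) - 1 ≠ 0 := by linarith
    field_simp
    ring
  linarith

end CriticalRadius

theorem add_mul_sq_smallRoot {C M : ℝ} (h : 4 * C * M ≤ 1) :
    M + C * (2 * M / (1 + Real.sqrt (1 - 4 * C * M))) ^ 2
      = 2 * M / (1 + Real.sqrt (1 - 4 * C * M)) := by
  have hs := Real.sq_sqrt (sub_nonneg.mpr h)
  set s := Real.sqrt (1 - 4 * C * M)
  have : 0 < 1 + s := by positivity
  field_simp
  linear_combination M * hs

section CoupledRecursion

variable {γ : ℕ} {C ξ ξt M B : ℝ}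

theorem coupled_step_le (hC : 0 ≤ C) (hξM : ξ ≤ M) (hξt : 0 ≤ ξt) (hξtM : ξt ≤ M)
    (hB : 0 ≤ B) (hMB : M + C * B ^ γ ≤ B) {x xt y yt : ℝ} (hx : 0 ≤ x) (hxB : x ≤ B)
    (hxt : 0 ≤ xt) (hxtB : xt ≤ B) (hy : y ≤ ξ + C * x ^ γ)
    (hyt : yt ^ 2 ≤ ξt ^ 2 + 2 * ξ * C * x ^ γ + C ^ 2 * xt ^ (2 * γ)) : y ≤ B ∧ yt ≤ B := by
  have hM : 0 ≤ M := hξt.trans hξtM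
  have hCx : C * x ^ γ ≤ C * B ^ γ := by gcongr
  have hCxt : C * xt ^ γ ≤ C * B ^ γ := by gcongr
  refine ⟨by linarith, le_of_sq_le_sq ?_ hB⟩
  calc yt ^ 2 ≤ ξt ^ 2 + 2 * ξ * (C * x ^ γ) + (C * xt ^ γ) ^ 2 := by
        convert hyt using 1; ring
    _ ≤ M ^ 2 + 2 * M * (C * B ^ γ) + (C * B ^ γ) ^ 2 := by
        gcongr
    _ = (M + C * B ^ γ) ^ 2 := by ring
    _ ≤ B ^ 2 := by gcongr

theorem coupled_le_of_add_mul_pow_le (hC : 0 ≤ C) (hξM : ξ ≤ M) (hξt : 0 ≤ ξt) (hξtM : ξt ≤ M)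
    (hB : 0 ≤ B) (hMB : M + C * B ^ γ ≤ B) {η ηt : ℕ → ℝ}
    (hη_nonneg : ∀ ℓ : ℕ, 1 ≤ ℓ → 0 ≤ η ℓ) (hηt_nonneg : ∀ ℓ : ℕ, 1 ≤ ℓ → 0 ≤ ηt ℓ)
    (hη1 : η 1 ≤ ξ) (hηrec : ∀ ℓ : ℕ, 1 ≤ ℓ → η (ℓ + 1) ≤ ξ + C * η ℓ ^ γ)
    (hηt1 : ηt 1 ^ 2 ≤ ξt ^ 2)
    (hηtrec : ∀ ℓ : ℕ, 1 ≤ ℓ →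
      ηt (ℓ + 1) ^ 2 ≤ ξt ^ 2 + 2 * ξ * C * η ℓ ^ γ + C ^ 2 * ηt ℓ ^ (2 * γ)) :
    ∀ ℓ : ℕ, 1 ≤ ℓ → max (η ℓ) (ηt ℓ) ≤ B := by
  have hMleB : M ≤ B := by
    have : 0 ≤ C * B ^ γ := by positivity
    linarith
  intro ℓ hℓ
  induction ℓ, hℓ using Nat.le_induction with
  | base =>
    refine max_le (hη1.trans (hξM.trans hMleB)) (le_of_sq_le_sq ?_ hB)
    calc ηt 1 ^ 2 ≤ ξt ^ 2 := hηt1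
      _ ≤ B ^ 2 := by gcongr; exact hξtM.trans hMleB
  | succ n hn ih =>
    obtain ⟨hηB, hηtB⟩ := max_le_iff.mp ih
    obtain ⟨h, ht⟩ := coupled_step_le hC hξM hξt hξtM hB hMB (hη_nonneg n hn) hηB
      (hηt_nonneg n hn) hηtB (hηrec n hn) (hηtrec n hn)
    exact max_le h ht

end CoupledRecursion

theorem stmt_1_general (η ηt : ℕ → ℝ) (γ : ℕ) (hγ : 2 ≤ γ) (Cstar ξ ξt : ℝ)
    (hCstar : 0 < Cstar) (hξt : 0 ≤ ξt)
    (hη_nonneg : ∀ ℓ : ℕ, 1 ≤ ℓ → 0 ≤ η ℓ)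
    (hηt_nonneg : ∀ ℓ : ℕ, 1 ≤ ℓ → 0 ≤ ηt ℓ)
    (hη1 : η 1 ≤ ξ)
    (hηrec : ∀ ℓ : ℕ, 1 ≤ ℓ → η (ℓ + 1) ≤ ξ + Cstar * η ℓ ^ γ)
    (hηt1 : ηt 1 ^ 2 ≤ ξt ^ 2)
    (hηtrec : ∀ ℓ : ℕ, 1 ≤ ℓ →
      ηt (ℓ + 1) ^ 2 ≤ ξt ^ 2 + 2 * ξ * Cstar * η ℓ ^ γ + Cstar ^ 2 * ηt ℓ ^ (2 * γ))
    (hCγ : 1 < Cstar * γ)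
    (hξsmall : max ξ ξt ≤ ((γ : ℝ) - 1) / γ * (Cstar * γ) ^ (-(1 : ℝ) / ((γ : ℝ) - 1))) :
    (∀ ℓ : ℕ, 1 ≤ ℓ →
        max (η ℓ) (ηt ℓ) ≤ (γ : ℝ) / ((γ : ℝ) - 1) * max ξ ξt ∧
          (γ : ℝ) / ((γ : ℝ) - 1) * max ξ ξt < 1) ∧
      (γ = 2 → ∀ ℓ : ℕ, 1 ≤ ℓ →
        max (η ℓ) (ηt ℓ) ≤ 2 * max ξ ξt / (1 + Real.sqrt (1 - 4 * Cstar * max ξ ξt)) ∧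
          2 * max ξ ξt / (1 + Real.sqrt (1 - 4 * Cstar * max ξ ξt)) < 1) := by
  set M := max ξ ξt
  have hξM : ξ ≤ M := le_max_left ξ ξt
  have hξtM : ξt ≤ M := le_max_right ξ ξt
  have hM0 : 0 ≤ M := hξt.trans hξtM
  have bound : ∀ B, 0 ≤ B → M + Cstar * B ^ γ ≤ B → ∀ ℓ, 1 ≤ ℓ → max (η ℓ) (ηt ℓ) ≤ B :=
    fun B hB hMB => coupled_le_of_add_mul_pow_le hCstar.le hξM hξt hξtM hB hMB
    hη_nonneg hηt_nonneg hη1 hηrec hηt1 hηtrec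
  have hB1 : (γ : ℝ) / ((γ : ℝ) - 1) * M < 1 :=
    (div_sub_one_mul_le_criticalRadius hγ hξsmall).trans_lt (criticalRadius_lt_one hγ hCγ)
  refine ⟨fun ℓ hℓ => ⟨bound _ ?_ (add_mul_pow_le_of_le_criticalRadius hγ hCstar hM0 hξsmall) ℓ hℓ,
    hB1⟩, ?_⟩
  · have : (2 : ℝ) ≤ γ := by exact_mod_cast hγ
    have : 0 ≤ (γ : ℝ) - 1 := by linarith
    positivity
  rintro rfl
  have h4CM : 4 * Cstar * M ≤ 1 := by
    have h : M ≤ 1 / (4 * Cstar) := by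
      convert hξsmall using 1
      rw [← criticalRadius, criticalRadius_two]
      norm_num
      ring
    rwa [le_div_iff₀ (by positivity), mul_comm] at h
  refine fun ℓ hℓ => ⟨bound _ (by positivity) (add_mul_sq_smallRoot h4CM).le ℓ hℓ, ?_⟩
  calc 2 * M / (1 + Real.sqrt (1 - 4 * Cstar * M)) ≤ 2 * M :=
        div_le_self (by positivity) (le_add_of_nonneg_right (Real.sqrt_nonneg _))
    _ < 1 := by norm_num at hB1; exact hB1

/-- Tensor-space adaptation of the multigrid recursion lemma: coupled recursive bounds
for the sequences `η ℓ` and `η⊗ ℓ`. -/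
theorem stmt_1 (η ηt : ℕ → ℝ) (γ : ℕ) (hγ : 2 ≤ γ) (Cstar ξ ξt : ℝ)
    (hCstar : 0 < Cstar) (hξ : 0 ≤ ξ) (hξt : 0 ≤ ξt)
    (hη_nonneg : ∀ ℓ : ℕ, 1 ≤ ℓ → 0 ≤ η ℓ)
    (hηt_nonneg : ∀ ℓ : ℕ, 1 ≤ ℓ → 0 ≤ ηt ℓ)
    (hη1 : η 1 ≤ ξ)
    (hηrec : ∀ ℓ : ℕ, 1 ≤ ℓ → η (ℓ + 1) ≤ ξ + Cstar * η ℓ ^ γ)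
    (hηt1 : ηt 1 ^ 2 ≤ ξt ^ 2)
    (hηtrec : ∀ ℓ : ℕ, 1 ≤ ℓ →
      ηt (ℓ + 1) ^ 2 ≤ ξt ^ 2 + 2 * ξ * Cstar * η ℓ ^ γ + Cstar ^ 2 * ηt ℓ ^ (2 * γ))
    (hCγ : 1 < Cstar * γ)
    (hξsmall : max ξ ξt ≤ ((γ : ℝ) - 1) / γ * (Cstar * γ) ^ (-(1 : ℝ) / ((γ : ℝ) - 1))) :
    (∀ ℓ : ℕ, 1 ≤ ℓ →
        max (η ℓ) (ηt ℓ) ≤ (γ : ℝ) / ((γ : ℝ) - 1) * max ξ ξt ∧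
          (γ : ℝ) / ((γ : ℝ) - 1) * max ξ ξt < 1) ∧
      (γ = 2 → ∀ ℓ : ℕ, 1 ≤ ℓ →
        max (η ℓ) (ηt ℓ) ≤ 2 * max ξ ξt / (1 + Real.sqrt (1 - 4 * Cstar * max ξ ξt)) ∧
          2 * max ξ ξt / (1 + Real.sqrt (1 - 4 * Cstar * max ξ ξt)) < 1) :=
  stmt_1_general η ηt γ hγ Cstar ξ ξt hCstar hξt hη_nonneg hηt_nonneg hη1 hηrec hηt1 hηtrec hCγ
    hξsmall
end

section
/- Under the Smoothing property, the Approximation property, the Smoother assumption and the Prolongation assumption, let γ ≥ 2 be an integer, ν₁, ν₂ ≥ 1, set C_* = C_S · C̲_p · C̄_p · (C_S + C_A η(ν₁)) and ξ = max_{1≤ℓ≤L} ‖E^TG_ℓ(ν₁,ν₂)‖₂. If C_* γ > 1 and ξ ≤ ((γ−1)/γ) · (C_* γ)^{−1/(γ−1)}, then the fault-free multigrid iteration matrices satisfy ‖E_ℓ‖₂ ≤ (γ/(γ−1)) ξ < 1 for all ℓ = 1,…,L; i.e., the W-cycle and higher-cycle multigrid methods converge uniformly in the number of levels. -/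
/-! Write `E_ℓ = E^TG_ℓ + S^ν₂ P E_{ℓ-1}^γ W` with `W = A_{ℓ-1}⁻¹ Pᵀ A_ℓ S^ν₁`. Since
`P W = S^ν₁ - (E^CG_ℓ A_ℓ⁻¹) (A_ℓ S^ν₁)`, the smoother, approximation and smoothing properties give
`‖P W‖ ≤ C_S + C_A η(ν₁)`, and the lower prolongation bound turns this into a bound on `‖W‖`.
Hence `‖E_ℓ‖ ≤ ξ + C_* ‖E_{ℓ-1}‖^γ`. The value `t = γ/(γ-1) ξ` is mapped below itself by
`s ↦ ξ + C_* s^γ` as soon as `C_* γ t^(γ-1) ≤ 1`, which is the smallness assumption on `ξ`. -/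

open Matrix Filter
open scoped ENNReal

/-- Spectral norm (ℓ²-operator norm) of a real matrix. -/
noncomputable def specNorm {m n : Type*} [Fintype m] [Fintype n] [DecidableEq n]
    (M : Matrix m n ℝ) : ℝ :=
  ‖LinearMap.toContinuousLinearMap (Matrix.toEuclideanLin M)‖

/-- Spectral radius of a real matrix (computed over the complex spectrum). -/
noncomputable def specRad {n : Type*} [Fintype n] [DecidableEq n]
    (M : Matrix n n ℝ) : ℝ≥0∞ :=
  spectralRadius ℂ (M.map (algebraMap ℝ ℂ))

/-- Euclidean norm of a vector. -/
noncomputable def euclNorm {n : Type*} [Fintype n] (x : n → ℝ) : ℝ :=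
  Real.sqrt (∑ i, (x i) ^ 2)

open scoped Matrix.Norms.L2Operator

section EuclideanNorm

variable {m n k : Type*} [Fintype m] [Fintype n] [Fintype k]

theorem euclNorm_eq_norm (x : n → ℝ) : euclNorm x = ‖WithLp.toLp 2 x‖ := by
  simp [euclNorm, EuclideanSpace.norm_eq, sq_abs]

theorem euclNorm_mulVec_le [DecidableEq n] (M : Matrix m n ℝ) (x : n → ℝ) :
    euclNorm (M *ᵥ x) ≤ ‖M‖ * euclNorm x := by
  simpa [euclNorm_eq_norm] using M.l2_opNorm_mulVec (WithLp.toLp 2 x)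

theorem norm_le_of_euclNorm_mulVec_le [DecidableEq n] (M : Matrix m n ℝ) {C : ℝ} (hC : 0 ≤ C)
    (h : ∀ x, euclNorm (M *ᵥ x) ≤ C * euclNorm x) : ‖M‖ ≤ C := by
  refine ContinuousLinearMap.opNorm_le_bound _ hC fun x => ?_
  simpa [euclNorm_eq_norm, Matrix.toLpLin_apply] using h x.ofLp

theorem norm_le_mul_norm_mul_of_le_euclNorm_mulVec [DecidableEq k] (P : Matrix m n ℝ)
    (W : Matrix n k ℝ) {c : ℝ} (hc : 0 < c)
    (hP : ∀ y, c⁻¹ * euclNorm y ≤ euclNorm (P *ᵥ y)) : ‖W‖ ≤ c * ‖P * W‖ := by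
  refine norm_le_of_euclNorm_mulVec_le W (by positivity) fun x => ?_
  calc euclNorm (W *ᵥ x) ≤ c * euclNorm (P *ᵥ W *ᵥ x) := by
        have := mul_le_mul_of_nonneg_left (hP (W *ᵥ x)) hc.le
        rwa [← mul_assoc, mul_inv_cancel₀ hc.ne', one_mul] at this
    _ ≤ c * (‖P * W‖ * euclNorm x) := by
        rw [Matrix.mulVec_mulVec]
        exact mul_le_mul_of_nonneg_left (euclNorm_mulVec_le _ _) hc.le
    _ = c * ‖P * W‖ * euclNorm x := (mul_assoc _ _ _).symm

theorem nonneg_of_euclNorm_mulVec_le [Nonempty n] (P : Matrix m n ℝ) {c : ℝ}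
    (hP : ∀ x, euclNorm (P *ᵥ x) ≤ c * euclNorm x) : 0 ≤ c := by
  have hx : 0 < euclNorm (fun _ : n => (1 : ℝ)) := by
    simp [euclNorm, Fintype.card_pos]
  exact nonneg_of_mul_nonneg_left ((Real.sqrt_nonneg _).trans (hP _)) hx

end EuclideanNorm

section CoarseGridCorrection

variable {m k : Type*} [Fintype m] [Fintype k] [DecidableEq m] [DecidableEq k]

theorem multigrid_correction_eq_add (A S₁ S₂ : Matrix m m ℝ) (Ac F : Matrix k k ℝ)
    (P : Matrix m k ℝ) :
    S₂ * (1 - P * (1 - F) * Ac⁻¹ * Pᵀ * A) * S₁ =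
      S₂ * (1 - P * Ac⁻¹ * Pᵀ * A) * S₁ + S₂ * (P * F * (Ac⁻¹ * Pᵀ * A * S₁)) := by
  simp only [Matrix.mul_sub, Matrix.sub_mul, Matrix.mul_one, Matrix.mul_assoc]
  abel

theorem prolong_mul_coarse_solve_eq {A : Matrix m m ℝ} (hA : IsUnit A) (Ac : Matrix k k ℝ)
    (P : Matrix m k ℝ) (S : Matrix m m ℝ) :
    P * (Ac⁻¹ * Pᵀ * A * S) = S - (1 - P * Ac⁻¹ * Pᵀ * A) * A⁻¹ * (A * S) := by
  rw [Matrix.mul_assoc _ A⁻¹, ← Matrix.mul_assoc A⁻¹, Matrix.nonsing_inv_mul _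
    ((Matrix.isUnit_iff_isUnit_det A).mp hA), Matrix.one_mul, Matrix.sub_mul, Matrix.one_mul,
    sub_sub_cancel]
  simp only [Matrix.mul_assoc]

theorem norm_prolong_mul_coarse_solve_le [Nonempty m] {A : Matrix m m ℝ} (hA : IsUnit A)
    (Ac : Matrix k k ℝ) (P : Matrix m k ℝ) {S : Matrix m m ℝ} {C_S C_A η : ℝ}
    (hS : ‖S‖ ≤ C_S) (hAS : ‖A * S‖ ≤ η * ‖A‖)
    (hCG : ‖(1 - P * Ac⁻¹ * Pᵀ * A) * A⁻¹‖ ≤ C_A / ‖A‖) :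
    ‖P * (Ac⁻¹ * Pᵀ * A * S)‖ ≤ C_S + C_A * η := by
  have hA₀ : ‖A‖ ≠ 0 := norm_ne_zero_iff.mpr hA.ne_zero
  rw [prolong_mul_coarse_solve_eq hA]
  refine (norm_sub_le _ _).trans (add_le_add hS ?_)
  calc ‖(1 - P * Ac⁻¹ * Pᵀ * A) * A⁻¹ * (A * S)‖
      ≤ ‖(1 - P * Ac⁻¹ * Pᵀ * A) * A⁻¹‖ * ‖A * S‖ := norm_mul_le _ _
    _ ≤ C_A / ‖A‖ * (η * ‖A‖) := mul_le_mul hCG hAS (norm_nonneg _) ((norm_nonneg _).trans hCG)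
    _ = C_A * η := by field_simp

theorem norm_multigrid_step_le {A S₁ S₂ : Matrix m m ℝ} (hA : IsUnit A) (Ac F : Matrix k k ℝ)
    {P : Matrix m k ℝ} {C_S C_A η c_lo c_hi : ℝ}
    (hS₁ : ‖S₁‖ ≤ C_S) (hS₂ : ‖S₂‖ ≤ C_S) (hAS : ‖A * S₁‖ ≤ η * ‖A‖)
    (hCG : ‖(1 - P * Ac⁻¹ * Pᵀ * A) * A⁻¹‖ ≤ C_A / ‖A‖)
    (hP_lo : ∀ x, c_lo⁻¹ * euclNorm x ≤ euclNorm (P *ᵥ x))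
    (hP_hi : ∀ x, euclNorm (P *ᵥ x) ≤ c_hi * euclNorm x)
    (hC : 0 < C_S * c_lo * c_hi * (C_S + C_A * η)) :
    ‖S₂ * (1 - P * (1 - F) * Ac⁻¹ * Pᵀ * A) * S₁‖ ≤
      ‖S₂ * (1 - P * Ac⁻¹ * Pᵀ * A) * S₁‖ + C_S * c_lo * c_hi * (C_S + C_A * η) * ‖F‖ := by
  have hF : 0 ≤ C_S * c_lo * c_hi * (C_S + C_A * η) * ‖F‖ := by positivity
  rcases isEmpty_or_nonempty m with hm | hm
  · rw [Subsingleton.elim (S₂ * _ * S₁) 0, norm_zero]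
    exact add_nonneg (norm_nonneg _) hF
  rcases isEmpty_or_nonempty k with hk | hk
  · rw [Subsingleton.elim (1 - F) 1, Matrix.mul_one]
    exact le_add_of_nonneg_right hF
  rw [multigrid_correction_eq_add]
  refine (norm_add_le _ _).trans (add_le_add_right ?_ _)
  set W := Ac⁻¹ * Pᵀ * A * S₁
  have hPW : ‖P * W‖ ≤ C_S + C_A * η := norm_prolong_mul_coarse_solve_le hA Ac P hS₁ hAS hCG
  have hc_hi : 0 ≤ c_hi := nonneg_of_euclNorm_mulVec_le P hP_hi
  have hC_S : 0 ≤ C_S := (norm_nonneg _).trans hS₁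
  have hc_lo : 0 < c_lo :=
    pos_of_mul_pos_right (pos_of_mul_pos_left (pos_of_mul_pos_left hC
      ((norm_nonneg _).trans hPW)) hc_hi) hC_S
  have hW : ‖W‖ ≤ c_lo * (C_S + C_A * η) :=
    (norm_le_mul_norm_mul_of_le_euclNorm_mulVec P W hc_lo hP_lo).trans
      (mul_le_mul_of_nonneg_left hPW hc_lo.le)
  have hP : ‖P‖ ≤ c_hi := norm_le_of_euclNorm_mulVec_le P hc_hi hP_hi
  calc ‖S₂ * (P * F * W)‖ ≤ ‖S₂‖ * (‖P‖ * ‖F‖ * ‖W‖) := by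
        refine (norm_mul_le _ _).trans (mul_le_mul_of_nonneg_left ?_ (norm_nonneg _))
        exact (Matrix.l2_opNorm_mul _ _).trans
          (mul_le_mul_of_nonneg_right (Matrix.l2_opNorm_mul _ _) (norm_nonneg _))
    _ ≤ C_S * (c_hi * ‖F‖ * (c_lo * (C_S + C_A * η))) := by gcongr
    _ = C_S * c_lo * c_hi * (C_S + C_A * η) * ‖F‖ := by ring

end CoarseGridCorrection

section CycleRecursion

theorem pow_le_inv_of_le_rpow {γ : ℕ} (hγ : 1 < γ) {x t : ℝ} (hx : 0 < x) (ht₀ : 0 ≤ t)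
    (ht : t ≤ x ^ (-(1 : ℝ) / ((γ : ℝ) - 1))) : t ^ (γ - 1) ≤ x⁻¹ := by
  have hγ₁ : ((γ - 1 : ℕ) : ℝ) = (γ : ℝ) - 1 := by rw [Nat.cast_sub hγ.le, Nat.cast_one]
  have hγ₀ : (γ : ℝ) - 1 ≠ 0 := by rw [← hγ₁]; exact_mod_cast (Nat.sub_pos_of_lt hγ).ne'
  calc t ^ (γ - 1) ≤ (x ^ (-(1 : ℝ) / ((γ : ℝ) - 1))) ^ (γ - 1) := by gcongr
    _ = x⁻¹ := by
      rw [← Real.rpow_natCast, ← Real.rpow_mul hx.le, hγ₁, div_mul_cancel₀ _ hγ₀,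
        Real.rpow_neg_one]

theorem add_mul_pow_le_of_le_rpow {γ : ℕ} (hγ : 1 < γ) {C ξ : ℝ} (hC : 0 < C) (hξ₀ : 0 ≤ ξ)
    (hξ : ξ ≤ ((γ : ℝ) - 1) / γ * (C * γ) ^ (-(1 : ℝ) / ((γ : ℝ) - 1))) :
    ξ + C * ((γ : ℝ) / ((γ : ℝ) - 1) * ξ) ^ γ ≤ (γ : ℝ) / ((γ : ℝ) - 1) * ξ := by
  have hγ₁ : (1 : ℝ) < γ := by exact_mod_cast hγ
  have hγ₀ : (0 : ℝ) < (γ : ℝ) - 1 := by linarith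
  set t := (γ : ℝ) / ((γ : ℝ) - 1) * ξ
  have ht₀ : 0 ≤ t := by positivity
  have ht : t ≤ (C * γ) ^ (-(1 : ℝ) / ((γ : ℝ) - 1)) :=
    (le_inv_mul_iff₀ (by positivity)).mp (by rwa [inv_div])
  have hpow := pow_le_inv_of_le_rpow hγ (by positivity) ht₀ ht
  have hCt : C * t ^ γ ≤ t / γ := by
    calc C * t ^ γ = C * t ^ (γ - 1) * t := by
          rw [mul_assoc, ← pow_succ, Nat.sub_add_cancel hγ.le]
      _ ≤ C * (C * γ)⁻¹ * t := by gcongr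
      _ = t / γ := by field_simp
  have hξt : ξ = t - t / γ := by simp only [t]; field_simp
  linarith

theorem div_sub_one_mul_lt_one_of_le_rpow {γ : ℕ} (hγ : 1 < γ) {x ξ : ℝ} (hx : 1 < x)
    (hξ : ξ ≤ ((γ : ℝ) - 1) / γ * x ^ (-(1 : ℝ) / ((γ : ℝ) - 1))) :
    (γ : ℝ) / ((γ : ℝ) - 1) * ξ < 1 := by
  have hγ₀ : (0 : ℝ) < (γ : ℝ) - 1 := by
    have : (1 : ℝ) < γ := by exact_mod_cast hγ
    linarith
  have ht : (γ : ℝ) / ((γ : ℝ) - 1) * ξ ≤ x ^ (-(1 : ℝ) / ((γ : ℝ) - 1)) :=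
    (le_inv_mul_iff₀ (by positivity)).mp (by rwa [inv_div])
  exact ht.trans_lt (Real.rpow_lt_one_of_one_lt_of_neg hx (div_neg_of_neg_of_pos (by norm_num) hγ₀))

theorem forall_le_of_le_add_mul_pow {e : ℕ → ℝ} {L γ : ℕ} {ξ C t : ℝ} (hC : 0 ≤ C)
    (he : ∀ k, 0 ≤ e k) (h₀ : e 0 ≤ t) (hstep : ∀ k < L, e (k + 1) ≤ ξ + C * e k ^ γ)
    (hfix : ξ + C * t ^ γ ≤ t) : ∀ k ≤ L, e k ≤ t := by
  intro k
  induction k with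
  | zero => exact fun _ => h₀
  | succ k ih =>
    intro hk
    calc e (k + 1) ≤ ξ + C * e k ^ γ := hstep k hk
      _ ≤ ξ + C * t ^ γ := by gcongr; exacts [he k, ih (Nat.le_of_succ_le hk)]
      _ ≤ t := hfix

end CycleRecursion

-- Level `ℓ + 1` here is level `ℓ ∈ {1,…,L}` of the paper.
theorem stmt_6_general (L : ℕ) (n : ℕ → ℕ)
    (A : ∀ ℓ : ℕ, Matrix (Fin (n ℓ)) (Fin (n ℓ)) ℝ)
    (P : ∀ ℓ : ℕ, Matrix (Fin (n (ℓ + 1))) (Fin (n ℓ)) ℝ)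
    (N : ∀ ℓ : ℕ, Matrix (Fin (n ℓ)) (Fin (n ℓ)) ℝ)
    (hA : ∀ ℓ, ℓ ≤ L → (A ℓ).PosDef)
    (η : ℕ → ℝ)
    (hSmooth : ∀ ℓ, ℓ < L → ∀ ν : ℕ,
      specNorm (A (ℓ + 1) * (1 - N (ℓ + 1) * A (ℓ + 1)) ^ ν) ≤ η ν * specNorm (A (ℓ + 1)))
    (C_A : ℝ)
    (hApprox : ∀ ℓ, ℓ < L →
      specNorm ((1 - P ℓ * (A ℓ)⁻¹ * (P ℓ)ᵀ * A (ℓ + 1)) * (A (ℓ + 1))⁻¹)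
        ≤ C_A / specNorm (A (ℓ + 1)))
    (C_S : ℝ)
    (hSmootherNorm : ∀ ℓ, ℓ < L → ∀ ν : ℕ, 1 ≤ ν →
      specNorm ((1 - N (ℓ + 1) * A (ℓ + 1)) ^ ν) ≤ C_S)
    (Cp_lo Cp_hi : ℝ)
    (hProl : ∀ ℓ, ℓ < L → ∀ x : Fin (n ℓ) → ℝ,
      Cp_lo⁻¹ * euclNorm x ≤ euclNorm ((P ℓ).mulVec x) ∧
        euclNorm ((P ℓ).mulVec x) ≤ Cp_hi * euclNorm x)
    (ν₁ ν₂ γ : ℕ) (hν₁ : 1 ≤ ν₁) (hν₂ : 1 ≤ ν₂) (hγ : 2 ≤ γ)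
    (E : ∀ ℓ : ℕ, Matrix (Fin (n ℓ)) (Fin (n ℓ)) ℝ)
    (hE0 : E 0 = 0)
    (hErec : ∀ ℓ, ℓ < L →
      E (ℓ + 1) = (1 - N (ℓ + 1) * A (ℓ + 1)) ^ ν₂ *
        (1 - P ℓ * (1 - E ℓ ^ γ) * (A ℓ)⁻¹ * (P ℓ)ᵀ * A (ℓ + 1)) *
        (1 - N (ℓ + 1) * A (ℓ + 1)) ^ ν₁)
    (Cstar : ℝ) (hCstar : Cstar = C_S * Cp_lo * Cp_hi * (C_S + C_A * η ν₁))
    (ξ : ℝ)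
    (hξ : ξ = ⨆ ℓ : Fin L, specNorm ((1 - N ((ℓ : ℕ) + 1) * A ((ℓ : ℕ) + 1)) ^ ν₂ *
      (1 - P ℓ * (A ℓ)⁻¹ * (P ℓ)ᵀ * A ((ℓ : ℕ) + 1)) *
      (1 - N ((ℓ : ℕ) + 1) * A ((ℓ : ℕ) + 1)) ^ ν₁))
    (hCγ : 1 < Cstar * γ)
    (hξsmall : ξ ≤ ((γ : ℝ) - 1) / γ * (Cstar * γ) ^ (-(1 : ℝ) / ((γ : ℝ) - 1))) :
    ∀ ℓ, 1 ≤ ℓ → ℓ ≤ L →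
      specNorm (E ℓ) ≤ (γ : ℝ) / ((γ : ℝ) - 1) * ξ ∧ (γ : ℝ) / ((γ : ℝ) - 1) * ξ < 1 := by
  intro ℓ _ hℓL
  subst hCstar
  have hC : 0 < C_S * Cp_lo * Cp_hi * (C_S + C_A * η ν₁) :=
    pos_of_mul_pos_left (one_pos.trans hCγ) (Nat.cast_nonneg γ)
  have hTG : ∀ k < L, specNorm ((1 - N (k + 1) * A (k + 1)) ^ ν₂ *
      (1 - P k * (A k)⁻¹ * (P k)ᵀ * A (k + 1)) * (1 - N (k + 1) * A (k + 1)) ^ ν₁) ≤ ξ :=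
    fun k hk => hξ ▸ Finite.le_ciSup_of_le (⟨k, hk⟩ : Fin L) le_rfl
  have hξ₀ : 0 ≤ ξ := hξ ▸ Real.iSup_nonneg fun _ => norm_nonneg _
  have hstep : ∀ k < L, ‖E (k + 1)‖ ≤
      ξ + C_S * Cp_lo * Cp_hi * (C_S + C_A * η ν₁) * ‖E k‖ ^ γ := by
    intro k hk
    rw [hErec k hk]
    refine (norm_multigrid_step_le (hA (k + 1) hk).isUnit _ _ (hSmootherNorm k hk ν₁ hν₁)
      (hSmootherNorm k hk ν₂ hν₂) (hSmooth k hk ν₁) (hApprox k hk) (fun x => (hProl k hk x).1)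
      (fun x => (hProl k hk x).2) hC).trans (add_le_add (hTG k hk) ?_)
    gcongr
    exact norm_pow_le' _ (by omega)
  refine ⟨forall_le_of_le_add_mul_pow hC.le (fun _ => norm_nonneg _) ?_ hstep
    (add_mul_pow_le_of_le_rpow hγ hC hξ₀ hξsmall) ℓ hℓL, ?_⟩
  · show ‖E 0‖ ≤ _
    have hγ₁ : (1 : ℝ) ≤ γ := by exact_mod_cast (by omega : 1 ≤ γ)
    rw [hE0, norm_zero]
    exact mul_nonneg (div_nonneg (by linarith) (by linarith)) hξ₀
  · exact div_sub_one_mul_lt_one_of_le_rpow hγ hCγ hξsmall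

/-- W-cycle (and higher-cycle) convergence of the fault-free multigrid method, uniformly
in the number of levels: if `C_* γ > 1` and
`ξ = max_{1 ≤ ℓ ≤ L} ‖E^TG_ℓ(ν₁,ν₂)‖₂ ≤ ((γ-1)/γ)(C_* γ)^{-1/(γ-1)}`, then
`‖E_ℓ‖₂ ≤ (γ/(γ-1)) ξ < 1` for all `ℓ = 1,…,L`.
Level `ℓ+1` plays the role of level `ℓ ∈ {1,…,L}` of the paper. -/
theorem stmt_6 (L : ℕ) (n : ℕ → ℕ)
    (A : ∀ ℓ : ℕ, Matrix (Fin (n ℓ)) (Fin (n ℓ)) ℝ)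
    (P : ∀ ℓ : ℕ, Matrix (Fin (n (ℓ + 1))) (Fin (n ℓ)) ℝ)
    (N : ∀ ℓ : ℕ, Matrix (Fin (n ℓ)) (Fin (n ℓ)) ℝ)
    (hA : ∀ ℓ, ℓ ≤ L → (A ℓ).PosDef)
    (hP : ∀ ℓ, ℓ < L → Function.Injective (fun x => (P ℓ).mulVec x))
    (hGal : ∀ ℓ, ℓ < L → A ℓ = (P ℓ)ᵀ * A (ℓ + 1) * P ℓ)
    (η : ℕ → ℝ) (hη0 : ∀ ν, 0 ≤ η ν) (hηlim : Tendsto η atTop (nhds 0))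
    (hSmooth : ∀ ℓ, ℓ < L → ∀ ν : ℕ,
      specNorm (A (ℓ + 1) * (1 - N (ℓ + 1) * A (ℓ + 1)) ^ ν) ≤ η ν * specNorm (A (ℓ + 1)))
    (C_A : ℝ)
    (hApprox : ∀ ℓ, ℓ < L →
      specNorm ((1 - P ℓ * (A ℓ)⁻¹ * (P ℓ)ᵀ * A (ℓ + 1)) * (A (ℓ + 1))⁻¹)
        ≤ C_A / specNorm (A (ℓ + 1)))
    (C_S : ℝ)
    (hSmootherRad : ∀ ℓ, ℓ < L → specRad (1 - N (ℓ + 1) * A (ℓ + 1)) ≤ 1)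
    (hSmootherNorm : ∀ ℓ, ℓ < L → ∀ ν : ℕ, 1 ≤ ν →
      specNorm ((1 - N (ℓ + 1) * A (ℓ + 1)) ^ ν) ≤ C_S)
    (Cp_lo Cp_hi : ℝ)
    (hProl : ∀ ℓ, ℓ < L → ∀ x : Fin (n ℓ) → ℝ,
      Cp_lo⁻¹ * euclNorm x ≤ euclNorm ((P ℓ).mulVec x) ∧
        euclNorm ((P ℓ).mulVec x) ≤ Cp_hi * euclNorm x)
    (ν₁ ν₂ γ : ℕ) (hν₁ : 1 ≤ ν₁) (hν₂ : 1 ≤ ν₂) (hγ : 2 ≤ γ)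
    (E : ∀ ℓ : ℕ, Matrix (Fin (n ℓ)) (Fin (n ℓ)) ℝ)
    (hE0 : E 0 = 0)
    (hErec : ∀ ℓ, ℓ < L →
      E (ℓ + 1) = (1 - N (ℓ + 1) * A (ℓ + 1)) ^ ν₂ *
        (1 - P ℓ * (1 - E ℓ ^ γ) * (A ℓ)⁻¹ * (P ℓ)ᵀ * A (ℓ + 1)) *
        (1 - N (ℓ + 1) * A (ℓ + 1)) ^ ν₁)
    (Cstar : ℝ) (hCstar : Cstar = C_S * Cp_lo * Cp_hi * (C_S + C_A * η ν₁))
    (ξ : ℝ)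
    (hξ : ξ = ⨆ ℓ : Fin L, specNorm ((1 - N ((ℓ : ℕ) + 1) * A ((ℓ : ℕ) + 1)) ^ ν₂ *
      (1 - P ℓ * (A ℓ)⁻¹ * (P ℓ)ᵀ * A ((ℓ : ℕ) + 1)) *
      (1 - N ((ℓ : ℕ) + 1) * A ((ℓ : ℕ) + 1)) ^ ν₁))
    (hCγ : 1 < Cstar * γ)
    (hξsmall : ξ ≤ ((γ : ℝ) - 1) / γ * (Cstar * γ) ^ (-(1 : ℝ) / ((γ : ℝ) - 1))) :
    ∀ ℓ, 1 ≤ ℓ → ℓ ≤ L →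
      specNorm (E ℓ) ≤ (γ : ℝ) / ((γ : ℝ) - 1) * ξ ∧ (γ : ℝ) / ((γ : ℝ) - 1) * ξ < 1 :=
  stmt_6_general L n A P N hA η hSmooth C_A hApprox C_S hSmootherNorm Cp_lo Cp_hi hProl ν₁ ν₂ γ hν₁
    hν₂ hγ E hE0 hErec Cstar hCstar ξ hξ hCγ hξsmall
end

section
/- Let X_R be a random diagonal matrix in ℝ^{m×m} and X_ρ a random diagonal matrix in ℝ^{n×n}, independent of each other, with E[X_R] = e_R I, E[X_ρ] = e_ρ I, max_{i,j}|Cov((X_R)_ii,(X_R)_jj)| ≤ ε_R and max_{i,j}|Cov((X_ρ)_ii,(X_ρ)_jj)| ≤ ε_ρ. Then for any matrix R ∈ ℝ^{m×n}, ‖E[(X_R R X_ρ) ⊗ (X_R R X_ρ)]‖₂ ≤ (ε_R + e_R²)(ε_ρ + e_ρ²)‖R‖₂². -/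
open Matrix MeasureTheory ProbabilityTheory
open scoped Kronecker ENNReal

/-- Entrywise expectation of a random matrix. -/
noncomputable def matExp {Ω : Type*} [MeasurableSpace Ω] (μ : Measure Ω)
    {m n : Type*} (X : Ω → Matrix m n ℝ) : Matrix m n ℝ :=
  Matrix.of fun i j => ∫ ω, X ω i j ∂μ

/-- Covariance of two real random variables. -/
noncomputable def cov {Ω : Type*} [MeasurableSpace Ω] (μ : Measure Ω) (f g : Ω → ℝ) : ℝ :=
  (∫ ω, f ω * g ω ∂μ) - (∫ ω, f ω ∂μ) * (∫ ω, g ω ∂μ)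

/-!
By independence, each entry of `E[(X_R R X_ρ) ⊗ (X_R R X_ρ)]` factors, so the matrix equals
`diag(A) (R ⊗ R) diag(B)` with `A_{ii'} = E[(X_R)_i (X_R)_{i'}] = Cov + e_R²` and likewise `B`.
Hence its spectral norm is at most `max |A| · ‖R ⊗ R‖ · max |B|`. The bound `‖R ⊗ S‖ ≤ ‖R‖ ‖S‖`
comes from `(R ⊗ S) vec X = vec (S X Rᵀ)` and the Frobenius bound `‖T Y‖_F ≤ ‖T‖ ‖Y‖_F`,
applied to `S (X Rᵀ)` and, after transposing, to `R Xᵀ`.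
-/

open scoped Matrix.Norms.L2Operator
open WithLp (toLp)

theorem specNorm_eq_l2_opNorm {m n : Type*} [Fintype m] [Fintype n] [DecidableEq n]
    (M : Matrix m n ℝ) : specNorm M = ‖M‖ := rfl

namespace Matrix

variable {𝕜 : Type*} [RCLike 𝕜] {l m n p : Type*} [Fintype l] [Fintype m] [Fintype n] [Fintype p]

theorem norm_toLp_vec_sq (Y : Matrix m n 𝕜) :
    ‖toLp 2 (vec Y)‖ ^ 2 = ∑ k, ‖toLp 2 (Yᵀ k)‖ ^ 2 := by
  simp only [EuclideanSpace.norm_sq_eq, Fintype.sum_prod_type]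
  rfl

theorem norm_toLp_vec_transpose (Y : Matrix m n 𝕜) :
    ‖toLp 2 (vec Yᵀ)‖ = ‖toLp 2 (vec Y)‖ := by
  rw [← sq_eq_sq₀ (norm_nonneg _) (norm_nonneg _), norm_toLp_vec_sq, norm_toLp_vec_sq]
  simp only [EuclideanSpace.norm_sq_eq]
  exact Finset.sum_comm

theorem norm_toLp_vec_mul_le [DecidableEq n] (A : Matrix m n 𝕜) (Y : Matrix n p 𝕜) :
    ‖toLp 2 (vec (A * Y))‖ ≤ ‖A‖ * ‖toLp 2 (vec Y)‖ := by
  refine (sq_le_sq₀ (norm_nonneg _) (by positivity)).mp ?_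
  rw [mul_pow, norm_toLp_vec_sq, norm_toLp_vec_sq, Finset.mul_sum]
  gcongr with k
  have hcol : (A * Y)ᵀ k = A *ᵥ Yᵀ k := by
    ext i; simp [mul_apply, mulVec, dotProduct]
  rw [hcol, ← mul_pow]
  exact pow_le_pow_left₀ (norm_nonneg _) (l2_opNorm_mulVec A (toLp 2 (Yᵀ k))) 2

theorem l2_opNorm_kronecker_le [DecidableEq m] [DecidableEq p] (A : Matrix l m 𝕜)
    (B : Matrix n p 𝕜) : ‖A ⊗ₖ B‖ ≤ ‖A‖ * ‖B‖ := by
  rw [l2_opNorm_def]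
  refine ContinuousLinearMap.opNorm_le_bound _ (by positivity) fun x => ?_
  set X : Matrix p m 𝕜 := of fun k j => x (j, k)
  have hx : x = toLp 2 (vec X) := rfl
  have hXt : ‖toLp 2 (vec (X * Aᵀ))‖ = ‖toLp 2 (vec (A * Xᵀ))‖ := by
    rw [← norm_toLp_vec_transpose, transpose_mul, transpose_transpose]
  simp only [LinearEquiv.trans_apply, LinearMap.coe_toContinuousLinearMap', toLpLin_apply]
  rw [hx, kronecker_mulVec_vec, Matrix.mul_assoc]
  calc ‖toLp 2 (vec (B * (X * Aᵀ)))‖ ≤ ‖B‖ * ‖toLp 2 (vec (A * Xᵀ))‖ :=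
        hXt ▸ norm_toLp_vec_mul_le B (X * Aᵀ)
    _ ≤ ‖B‖ * (‖A‖ * ‖toLp 2 (vec X)‖) := by
        grw [norm_toLp_vec_mul_le, norm_toLp_vec_transpose]
    _ = ‖A‖ * ‖B‖ * ‖toLp 2 (vec X)‖ := by ring

theorem l2_opNorm_diagonal_mul_kronecker_mul_diagonal_le [DecidableEq m] [DecidableEq n]
    {a : m × m → 𝕜} {b : n × n → 𝕜} {c d : ℝ} (ha : ∀ i, ‖a i‖ ≤ c) (hb : ∀ j, ‖b j‖ ≤ d)
    (R : Matrix m n 𝕜) : ‖diagonal a * (R ⊗ₖ R) * diagonal b‖ ≤ c * d * ‖R‖ ^ 2 := by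
  rcases isEmpty_or_nonempty m with hm | ⟨⟨i⟩⟩
  · simp [Subsingleton.elim R 0]
  rcases isEmpty_or_nonempty n with hn | ⟨⟨j⟩⟩
  · simp [Subsingleton.elim R 0]
  have hc : 0 ≤ c := (norm_nonneg _).trans (ha (i, i))
  have hd : 0 ≤ d := (norm_nonneg _).trans (hb (j, j))
  have hac : ‖diagonal a‖ ≤ c := by rwa [l2_opNorm_diagonal, pi_norm_le_iff_of_nonneg hc]
  have hbd : ‖diagonal b‖ ≤ d := by rwa [l2_opNorm_diagonal, pi_norm_le_iff_of_nonneg hd]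
  calc ‖diagonal a * (R ⊗ₖ R) * diagonal b‖
      ≤ ‖diagonal a‖ * ‖R ⊗ₖ R‖ * ‖diagonal b‖ := by grw [l2_opNorm_mul, l2_opNorm_mul]
    _ ≤ c * (‖R‖ * ‖R‖) * d := by grw [hac, hbd, l2_opNorm_kronecker_le]
    _ = c * d * ‖R‖ ^ 2 := by ring

end Matrix

section Expectation

variable {Ω : Type*} [MeasurableSpace Ω] {μ : Measure Ω}

theorem abs_integral_mul_le_of_abs_cov_le {f g : Ω → ℝ} {e ε : ℝ} (hf : ∫ ω, f ω ∂μ = e)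
    (hg : ∫ ω, g ω ∂μ = e) (hcov : |cov μ f g| ≤ ε) : |∫ ω, f ω * g ω ∂μ| ≤ ε + e ^ 2 := by
  have hsplit : ∫ ω, f ω * g ω ∂μ = cov μ f g + e ^ 2 := by rw [cov, hf, hg]; ring
  rw [hsplit]
  exact (abs_add_le _ _).trans (by rw [abs_sq]; linarith)

theorem matExp_kronecker_of_indepFun {ι κ : Type*} [Fintype ι] [Fintype κ] [DecidableEq ι] [DecidableEq κ]
    {X : Ω → ι → ℝ} {Y : Ω → κ → ℝ} (hX : ∀ i, AEStronglyMeasurable (fun ω => X ω i) μ)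
    (hY : ∀ j, AEStronglyMeasurable (fun ω => Y ω j) μ) (hXY : IndepFun X Y μ)
    (R S : Matrix ι κ ℝ) :
    matExp μ (fun ω => (diagonal (X ω) * R * diagonal (Y ω)) ⊗ₖ
        (diagonal (X ω) * S * diagonal (Y ω))) =
      diagonal (fun p : ι × ι => ∫ ω, X ω p.1 * X ω p.2 ∂μ) * (R ⊗ₖ S) *
        diagonal (fun q : κ × κ => ∫ ω, Y ω q.1 * Y ω q.2 ∂μ) := by
  ext p q
  have hind : IndepFun (fun ω => X ω p.1 * X ω p.2) (fun ω => Y ω q.1 * Y ω q.2) μ :=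
    hXY.comp (φ := fun x : ι → ℝ => x p.1 * x p.2) (ψ := fun y : κ → ℝ => y q.1 * y q.2)
      (by fun_prop) (by fun_prop)
  have hprod := hind.integral_mul_eq_mul_integral ((hX p.1).mul (hX p.2)) ((hY q.1).mul (hY q.2))
  rw [matExp, of_apply]
  simp only [kroneckerMap_apply, mul_diagonal, diagonal_mul, Pi.mul_apply] at hprod ⊢
  calc _ = ∫ ω, R p.1 q.1 * S p.2 q.2 * (X ω p.1 * X ω p.2 * (Y ω q.1 * Y ω q.2)) ∂μ := by
        congr 1; funext ω; ring
    _ = _ := by rw [integral_const_mul, hprod]; ring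

end Expectation

theorem stmt_10_general {Ω : Type*} [MeasurableSpace Ω] (μ : Measure Ω)
    (m n : ℕ) (XR : Ω → Fin m → ℝ) (Xρ : Ω → Fin n → ℝ)
    (hXR : ∀ i, MemLp (fun ω => XR ω i) 2 μ)
    (hXρ : ∀ i, MemLp (fun ω => Xρ ω i) 2 μ)
    (hIndep : IndepFun XR Xρ μ)
    (eR eρ εR ερ : ℝ)
    (hmR : ∀ i, ∫ ω, XR ω i ∂μ = eR)
    (hmρ : ∀ i, ∫ ω, Xρ ω i ∂μ = eρ)
    (hcR : ∀ i j, |cov μ (fun ω => XR ω i) (fun ω => XR ω j)| ≤ εR)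
    (hcρ : ∀ i j, |cov μ (fun ω => Xρ ω i) (fun ω => Xρ ω j)| ≤ ερ)
    (R : Matrix (Fin m) (Fin n) ℝ) :
    specNorm (matExp μ fun ω =>
        (Matrix.diagonal (XR ω) * R * Matrix.diagonal (Xρ ω)) ⊗ₖ
          (Matrix.diagonal (XR ω) * R * Matrix.diagonal (Xρ ω)))
      ≤ (εR + eR ^ 2) * (ερ + eρ ^ 2) * specNorm R ^ 2 := by
  rw [specNorm_eq_l2_opNorm, specNorm_eq_l2_opNorm, matExp_kronecker_of_indepFun
    (fun i => (hXR i).aestronglyMeasurable) (fun j => (hXρ j).aestronglyMeasurable) hIndep]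
  exact l2_opNorm_diagonal_mul_kronecker_mul_diagonal_le
    (fun p => abs_integral_mul_le_of_abs_cov_le (hmR p.1) (hmR p.2) (hcR p.1 p.2))
    (fun q => abs_integral_mul_le_of_abs_cov_le (hmρ q.1) (hmρ q.2) (hcρ q.1 q.2)) R

/-- For independent random diagonal matrices `X_R`, `X_ρ` with `E[X_R] = e_R I`,
`E[X_ρ] = e_ρ I` and covariances bounded by `ε_R`, `ε_ρ`, one has
`‖E[(X_R R X_ρ) ⊗ (X_R R X_ρ)]‖₂ ≤ (ε_R + e_R²)(ε_ρ + e_ρ²)‖R‖₂²`. -/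
theorem stmt_10 {Ω : Type*} [MeasurableSpace Ω] (μ : Measure Ω) [IsProbabilityMeasure μ]
    (m n : ℕ) (XR : Ω → Fin m → ℝ) (Xρ : Ω → Fin n → ℝ)
    (hXR : ∀ i, MemLp (fun ω => XR ω i) 2 μ)
    (hXρ : ∀ i, MemLp (fun ω => Xρ ω i) 2 μ)
    (hIndep : IndepFun XR Xρ μ)
    (eR eρ εR ερ : ℝ)
    (hmR : ∀ i, ∫ ω, XR ω i ∂μ = eR)
    (hmρ : ∀ i, ∫ ω, Xρ ω i ∂μ = eρ)
    (hcR : ∀ i j, |cov μ (fun ω => XR ω i) (fun ω => XR ω j)| ≤ εR)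
    (hcρ : ∀ i j, |cov μ (fun ω => Xρ ω i) (fun ω => Xρ ω j)| ≤ ερ)
    (R : Matrix (Fin m) (Fin n) ℝ) :
    specNorm (matExp μ fun ω =>
        (Matrix.diagonal (XR ω) * R * Matrix.diagonal (Xρ ω)) ⊗ₖ
          (Matrix.diagonal (XR ω) * R * Matrix.diagonal (Xρ ω)))
      ≤ (εR + eR ^ 2) * (ερ + eρ ^ 2) * specNorm R ^ 2 :=
  stmt_10_general μ m n XR Xρ hXR hXρ hIndep eR eρ εR ερ hmR hmρ hcR hcρ R
end

section
/- Let X be a random diagonal matrix in ℝ^{n×n} with E[X] = e·I, and let N, A ∈ ℝ^{n×n} be deterministic matrices. Then E[(I − X N A) ⊗ (I − X N A)] = (I − e N A) ⊗ (I − e N A) + V · ((N A) ⊗ (N A)), where V is the diagonal n²×n² matrix whose ((i−1)n+j)-th diagonal entry is Cov(X_ii, X_jj). -/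
open Matrix MeasureTheory
open scoped Kronecker

/-! With `D = diagonal X` and `M = N A`, the Kronecker square expands as
`(1 - D M) ⊗ (1 - D M) = 1 - (D ⊗ 1)(M ⊗ 1) - (1 ⊗ D)(1 ⊗ M) + (D ⊗ D)(M ⊗ M)`, where
`D ⊗ 1`, `1 ⊗ D` and `D ⊗ D` are again diagonal. Expectation is linear and commutes with
right multiplication by deterministic matrices, so each diagonal factor may be replaced by its
mean: `e • 1` for the first two and `diagonal (E[X_i X_j]) = e² • 1 + V` for the last. -/

theorem Matrix.one_sub_diagonal_mul_kronecker_self {m R : Type*} [Fintype m] [DecidableEq m]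
    [CommRing R] (x : m → R) (M : Matrix m m R) :
    (1 - diagonal x * M) ⊗ₖ (1 - diagonal x * M) =
      1 - diagonal (fun p : m × m => x p.1) * (M ⊗ₖ 1)
        - diagonal (fun p : m × m => x p.2) * (1 ⊗ₖ M)
        + diagonal (fun p : m × m => x p.1 * x p.2) * (M ⊗ₖ M) := by
  ext ⟨i, j⟩ ⟨k, l⟩
  simp only [kroneckerMap_apply, sub_apply, add_apply, diagonal_mul, ← one_kronecker_one (α := R)]
  ring

section matExp

variable {Ω : Type*} [MeasurableSpace Ω] {μ : Measure Ω} {m n : Type*}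

theorem matExp_add {X Y : Ω → Matrix m n ℝ} (hX : ∀ i j, Integrable (fun ω => X ω i j) μ)
    (hY : ∀ i j, Integrable (fun ω => Y ω i j) μ) :
    matExp μ (fun ω => X ω + Y ω) = matExp μ X + matExp μ Y := by
  ext i j
  exact integral_add (hX i j) (hY i j)

theorem matExp_sub {X Y : Ω → Matrix m n ℝ} (hX : ∀ i j, Integrable (fun ω => X ω i j) μ)
    (hY : ∀ i j, Integrable (fun ω => Y ω i j) μ) :
    matExp μ (fun ω => X ω - Y ω) = matExp μ X - matExp μ Y := by
  ext i j
  exact integral_sub (hX i j) (hY i j)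

theorem matExp_const [IsProbabilityMeasure μ] (C : Matrix m n ℝ) :
    matExp μ (fun _ => C) = C := by
  ext i j
  simp [matExp]

theorem matExp_diagonal_mul [Fintype m] [DecidableEq m] (d : Ω → m → ℝ) (C : Matrix m n ℝ) :
    matExp μ (fun ω => diagonal (d ω) * C) = diagonal (fun i => ∫ ω, d ω i ∂μ) * C := by
  ext i j
  simp only [matExp, of_apply, diagonal_mul]
  exact integral_mul_const _ _

end matExp

theorem integral_mul_eq_mul_integral_add_cov {Ω : Type*} [MeasurableSpace Ω] (μ : Measure Ω)
    (f g : Ω → ℝ) : ∫ ω, f ω * g ω ∂μ = (∫ ω, f ω ∂μ) * (∫ ω, g ω ∂μ) + cov μ f g :=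
  (add_sub_cancel _ _).symm

/-- For a random diagonal matrix `X` with `E[X] = e I` and deterministic `N`, `A`:
`E[(I - X N A) ⊗ (I - X N A)] = (I - e N A) ⊗ (I - e N A) + V ((N A) ⊗ (N A))`,
where `V` is the diagonal matrix of covariances of the diagonal entries of `X`. -/
theorem stmt_18 {Ω : Type*} [MeasurableSpace Ω] (μ : Measure Ω) [IsProbabilityMeasure μ]
    (n : ℕ) (X : Ω → Fin n → ℝ)
    (hX : ∀ i, MemLp (fun ω => X ω i) 2 μ)
    (e : ℝ) (hmean : ∀ i, ∫ ω, X ω i ∂μ = e)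
    (N A : Matrix (Fin n) (Fin n) ℝ) :
    matExp μ (fun ω =>
        (1 - Matrix.diagonal (X ω) * N * A) ⊗ₖ (1 - Matrix.diagonal (X ω) * N * A))
      = (1 - e • (N * A)) ⊗ₖ (1 - e • (N * A)) +
          Matrix.diagonal (fun p : Fin n × Fin n =>
              cov μ (fun ω => X ω p.1) (fun ω => X ω p.2)) *
            ((N * A) ⊗ₖ (N * A)) := by
  have hX₁ : ∀ i, Integrable (fun ω => X ω i) μ := fun i => (hX i).integrable one_le_two
  have hXX : ∀ i j, Integrable (fun ω => X ω i * X ω j) μ := fun i j =>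
    (hX i).integrable_mul (hX j)
  rw [smul_eq_diagonal_mul]
  simp_rw [Matrix.mul_assoc, one_sub_diagonal_mul_kronecker_self]
  rw [matExp_add, matExp_sub, matExp_sub, matExp_const, matExp_diagonal_mul, matExp_diagonal_mul,
    matExp_diagonal_mul]
  · simp only [hmean, integral_mul_eq_mul_integral_add_cov]
    rw [← diagonal_add, add_mul, add_assoc]
  · exact fun _ _ => integrable_const _
  all_goals intro p q; simp only [Matrix.sub_apply, diagonal_mul]; fun_prop
end
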